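/- arXiv:2505.22811 — 5 statements merged into one kernel-verified Lean document; each statement's English description precedes it below -/
import Mathlib

section
/- (Proposition on SVID optimality.) Let W ∈ ℝ^{m×n}, let B_W be its sign matrix, and let |W| be its entrywise absolute value. Suppose s_out ∈ ℝ^m and s_in ∈ ℝ^n are such that s_out s_inᵀ is a best rank-one Frobenius approximation of |W|, i.e. ‖|W| − s_out s_inᵀ‖_F ≤ ‖|W| − u vᵀ‖_F for all u ∈ ℝ^m, v ∈ ℝ^n (as is produced by rank-1 SVD truncation of |W|). Then for all c ∈ ℝ^m and d ∈ ℝ^n, ‖W − B_W ⊙ (s_out s_inᵀ)‖_F² ≤ ‖W − B_W ⊙ (c dᵀ)‖_F². -/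
open Matrix

/-- Frobenius norm of a real matrix. -/
noncomputable def frobNorm {m n : ℕ} (A : Matrix (Fin m) (Fin n) ℝ) : ℝ :=
  Real.sqrt (∑ i, ∑ j, (A i j) ^ 2)

/-- The sign matrix of `W`: entry `1` if `W i j ≥ 0`, and `-1` otherwise. -/
noncomputable def signMatrix {m n : ℕ} (W : Matrix (Fin m) (Fin n) ℝ) :
    Matrix (Fin m) (Fin n) ℝ :=
  Matrix.of fun i j => if 0 ≤ W i j then (1 : ℝ) else -1

/-- The entrywise absolute value of `W`. -/
def absMatrix {m n : ℕ} (W : Matrix (Fin m) (Fin n) ℝ) : Matrix (Fin m) (Fin n) ℝ :=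
  Matrix.of fun i j => |W i j|

lemma frob_eq {m n : ℕ} (W : Matrix (Fin m) (Fin n) ℝ)
    (u : Fin m → ℝ) (v : Fin n → ℝ) :
    frobNorm (W - Matrix.hadamard (signMatrix W) (Matrix.vecMulVec u v)) =
      frobNorm (absMatrix W - Matrix.vecMulVec u v) := by
  unfold frobNorm
  congr 1
  apply Finset.sum_congr rfl
  intro i _
  apply Finset.sum_congr rfl
  intro j _
  simp only [Matrix.sub_apply, Matrix.hadamard_apply, signMatrix, absMatrix,
    Matrix.of_apply, Matrix.vecMulVec_apply]
  by_cases h : 0 ≤ W i j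
  · rw [if_pos h, abs_of_nonneg h]; ring
  · rw [if_neg h, abs_of_neg (lt_of_not_ge h)]; ring

/-- SVID optimality: if `s_out s_inᵀ` is a best rank-one Frobenius approximation of
`|W|`, then `B_W ⊙ (s_out s_inᵀ)` is a best approximation of `W` among all
`B_W ⊙ (c dᵀ)`. -/
theorem svid_optimal {m n : ℕ} (W : Matrix (Fin m) (Fin n) ℝ)
    (sOut : Fin m → ℝ) (sIn : Fin n → ℝ)
    (hbest : ∀ (u : Fin m → ℝ) (v : Fin n → ℝ),
      frobNorm (absMatrix W - Matrix.vecMulVec sOut sIn) ≤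
        frobNorm (absMatrix W - Matrix.vecMulVec u v)) :
    ∀ (c : Fin m → ℝ) (d : Fin n → ℝ),
      (frobNorm (W - Matrix.hadamard (signMatrix W) (Matrix.vecMulVec sOut sIn))) ^ 2 ≤
        (frobNorm (W - Matrix.hadamard (signMatrix W) (Matrix.vecMulVec c d))) ^ 2 := by
  intro c d
  rw [frob_eq, frob_eq]
  have h := hbest c d
  have h0 : 0 ≤ frobNorm (absMatrix W - Matrix.vecMulVec sOut sIn) := Real.sqrt_nonneg _
  exact pow_le_pow_left₀ h0 h 2
end

section
/- (Proposition: sign-assisted rank-one approximation beats plain rank-one approximation.) Let W ∈ ℝ^{m×n}, let B_W be its sign matrix, and let |W| be its entrywise absolute value. Suppose s_out ∈ ℝ^m, s_in ∈ ℝ^n are such that s_out s_inᵀ is a best rank-one Frobenius approximation of |W| (i.e. ‖|W| − s_out s_inᵀ‖_F ≤ ‖|W| − u vᵀ‖_F for all u, v), and suppose a ∈ ℝ^m, b ∈ ℝ^n are such that a bᵀ is a best rank-one Frobenius approximation of W (i.e. ‖W − a bᵀ‖_F ≤ ‖W − u vᵀ‖_F for all u, v); both are produced by rank-1 SVD truncation.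 Then ‖W − B_W ⊙ (s_out s_inᵀ)‖_F² ≤ ‖W − a bᵀ‖_F². -/
open Matrix

lemma frobNorm_nonneg {m n : ℕ} (A : Matrix (Fin m) (Fin n) ℝ) : 0 ≤ frobNorm A :=
  Real.sqrt_nonneg _

lemma frobNorm_sq {m n : ℕ} (A : Matrix (Fin m) (Fin n) ℝ) :
    frobNorm A ^ 2 = ∑ i, ∑ j, (A i j) ^ 2 := by
  apply Real.sq_sqrt
  exact Finset.sum_nonneg fun i _ => Finset.sum_nonneg fun j _ => sq_nonneg _

/-- Sign-assisted rank-one approximation beats plain rank-one approximation: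
if `s_out s_inᵀ` is a best rank-one approximation of `|W|` and `a bᵀ` a best
rank-one approximation of `W` (both in Frobenius norm), then
`‖W − B_W ⊙ (s_out s_inᵀ)‖_F² ≤ ‖W − a bᵀ‖_F²`. -/
theorem sign_assisted_rank_one_beats_plain {m n : ℕ} (W : Matrix (Fin m) (Fin n) ℝ)
    (sOut : Fin m → ℝ) (sIn : Fin n → ℝ) (a : Fin m → ℝ) (b : Fin n → ℝ)
    (hbest_abs : ∀ (u : Fin m → ℝ) (v : Fin n → ℝ),
      frobNorm (absMatrix W - Matrix.vecMulVec sOut sIn) ≤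
        frobNorm (absMatrix W - Matrix.vecMulVec u v))
    (hbest_W : ∀ (u : Fin m → ℝ) (v : Fin n → ℝ),
      frobNorm (W - Matrix.vecMulVec a b) ≤ frobNorm (W - Matrix.vecMulVec u v)) :
    (frobNorm (W - Matrix.hadamard (signMatrix W) (Matrix.vecMulVec sOut sIn))) ^ 2 ≤
      (frobNorm (W - Matrix.vecMulVec a b)) ^ 2 := by
  have h1 : (frobNorm (W - Matrix.hadamard (signMatrix W) (Matrix.vecMulVec sOut sIn))) ^ 2 =
      (frobNorm (absMatrix W - Matrix.vecMulVec sOut sIn)) ^ 2 := by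
    rw [frobNorm_sq, frobNorm_sq]
    refine Finset.sum_congr rfl fun i _ => Finset.sum_congr rfl fun j _ => ?_
    simp only [Matrix.sub_apply, Matrix.hadamard_apply, signMatrix, absMatrix,
      Matrix.vecMulVec_apply, Matrix.of_apply]
    by_cases h : 0 ≤ W i j
    · rw [if_pos h, abs_of_nonneg h]; ring
    · rw [if_neg h, abs_of_neg (lt_of_not_ge h)]; ring
  have h2 : frobNorm (absMatrix W - Matrix.vecMulVec sOut sIn) ≤
      frobNorm (absMatrix W - Matrix.vecMulVec (fun i => |a i|) (fun j => |b j|)) :=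
    hbest_abs _ _
  have h3 : (frobNorm (absMatrix W - Matrix.vecMulVec (fun i => |a i|) (fun j => |b j|))) ^ 2 ≤
      (frobNorm (W - Matrix.vecMulVec a b)) ^ 2 := by
    rw [frobNorm_sq, frobNorm_sq]
    refine Finset.sum_le_sum fun i _ => Finset.sum_le_sum fun j _ => ?_
    simp only [Matrix.sub_apply, Matrix.vecMulVec_apply, absMatrix, Matrix.of_apply]
    rw [← abs_mul]
    have := abs_abs_sub_abs_le_abs_sub (W i j) (a i * b j)
    calc (|W i j| - |a i * b j|) ^ 2 = (|W i j| - |a i * b j|) ^ 2 := rfl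
      _ ≤ (W i j - a i * b j) ^ 2 := by
          rw [← sq_abs (|W i j| - |a i * b j|), ← sq_abs (W i j - a i * b j)]
          exact pow_le_pow_left₀ (abs_nonneg _) this 2
  calc (frobNorm (W - Matrix.hadamard (signMatrix W) (Matrix.vecMulVec sOut sIn))) ^ 2
      = (frobNorm (absMatrix W - Matrix.vecMulVec sOut sIn)) ^ 2 := h1
    _ ≤ (frobNorm (absMatrix W - Matrix.vecMulVec (fun i => |a i|) (fun j => |b j|))) ^ 2 :=
        pow_le_pow_left₀ (frobNorm_nonneg _) h2 2
    _ ≤ _ := h3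
end

section
/- (Boolean chain rule B2B(3).) For all f, g : Bool → Bool and every x : Bool, (g ∘ f)'(x) = g'(f(x)) · f'(x), where the Boolean derivative of h : Bool → Bool is h'(x) := Δ(x→¬x) · Δ(h(x)→h(¬x)). -/
/-- Boolean variation `Δ(x→y) ∈ {−1,0,1} ⊆ ℤ`: `0` if `y = x`, `1` if
`x = false` and `y = true`, `−1` if `x = true` and `y = false`. -/
def bvar (x y : Bool) : ℤ :=
  if y = x then 0 else if x = false then 1 else -1

/-- Boolean derivative of `f : Bool → Bool`:
`f'(x) := Δ(x→¬x) · Δ(f(x)→f(¬x))`. -/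
def bderiv (f : Bool → Bool) (x : Bool) : ℤ :=
  bvar x (!x) * bvar (f x) (f (!x))


/-- Boolean chain rule B2B(3): `(g ∘ f)'(x) = g'(f(x)) · f'(x)`. -/
theorem bderiv_comp (f g : Bool → Bool) (x : Bool) :
    bderiv (g ∘ f) x = bderiv g (f x) * bderiv f x := by
  rcases x with _ | _ <;>
    rcases hf : f false with _ | _ <;> rcases hf' : f true with _ | _ <;>
    rcases hg : g false with _ | _ <;> rcases hg' : g true with _ | _ <;>
    simp [bderiv, bvar, Function.comp, hf, hf', hg, hg']
end

section
/- (Multivariate Boolean chain rule.) Let n ≥ 1, let f : (Fin n → Bool) → Bool and g : Bool → Bool. For x : Fin n → Bool and i : Fin n, let x^{¬i} denote x with its i-th coordinate negated, and define the partial Boolean variation f'_i(x) := Δ(x_i → ¬x_i) · Δ(f(x) → f(x^{¬i})). Then for all x and i, (g ∘ f)'_i(x) = g'(f(x)) · f'_i(x), where g'(b) := Δ(b→¬b) · Δ(g(b)→g(¬b)). -/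
/-- Partial Boolean variation of `f : (Fin n → Bool) → Bool` with respect to the
`i`-th coordinate: `f'_i(x) := Δ(x_i → ¬x_i) · Δ(f(x) → f(x^{¬i}))`, where
`x^{¬i}` is `x` with its `i`-th coordinate negated. -/
def pbderiv {n : ℕ} (f : (Fin n → Bool) → Bool) (x : Fin n → Bool) (i : Fin n) : ℤ :=
  bvar (x i) (!(x i)) * bvar (f x) (f (Function.update x i (!(x i))))

/-- Multivariate Boolean chain rule: for `n ≥ 1`,
`(g ∘ f)'_i(x) = g'(f(x)) · f'_i(x)`. -/
theorem pbderiv_comp {n : ℕ} (hn : 1 ≤ n) (f : (Fin n → Bool) → Bool)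
    (g : Bool → Bool) (x : Fin n → Bool) (i : Fin n) :
    pbderiv (g ∘ f) x i = bderiv g (f x) * pbderiv f x i := by
  cases h1 : x i <;> cases h2 : f x <;>
    cases h3 : f (Function.update x i (!(x i))) <;>
    cases h4 : g true <;> cases h5 : g false <;>
    simp_all [pbderiv, bderiv, bvar, Function.comp]
end

section
/- (Successive SVID extraction strictly decreases the residual.) Let W ∈ ℝ^{m×n}, let B_W be its sign matrix, and let |W| be its entrywise absolute value. Suppose s_out ∈ ℝ^m, s_in ∈ ℝ^n are such that s_out s_inᵀ is a best rank-one Frobenius approximation of |W| (i.e. ‖|W| − s_out s_inᵀ‖_F ≤ ‖|W| − u vᵀ‖_F for all u, v). Then the residual W_res := W − B_W ⊙ (s_out s_inᵀ) satisfies ‖W_res‖_F ≤ ‖W‖_F, and the inequality is strict whenever W ≠ 0. -/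
open Matrix

/-- Successive SVID extraction decreases the residual: if `s_out s_inᵀ` is a best
rank-one Frobenius approximation of `|W|`, then the residual
`W_res = W − B_W ⊙ (s_out s_inᵀ)` satisfies `‖W_res‖_F ≤ ‖W‖_F`, strictly
whenever `W ≠ 0`. -/
theorem svid_residual_decreases {m n : ℕ} (W : Matrix (Fin m) (Fin n) ℝ)
    (sOut : Fin m → ℝ) (sIn : Fin n → ℝ)
    (hbest : ∀ (u : Fin m → ℝ) (v : Fin n → ℝ),
      frobNorm (absMatrix W - Matrix.vecMulVec sOut sIn) ≤
        frobNorm (absMatrix W - Matrix.vecMulVec u v)) :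
    frobNorm (W - Matrix.hadamard (signMatrix W) (Matrix.vecMulVec sOut sIn)) ≤
        frobNorm W ∧
      (W ≠ 0 →
        frobNorm (W - Matrix.hadamard (signMatrix W) (Matrix.vecMulVec sOut sIn)) <
          frobNorm W) := by
  have hkey : frobNorm (W - Matrix.hadamard (signMatrix W) (Matrix.vecMulVec sOut sIn)) =
      frobNorm (absMatrix W - Matrix.vecMulVec sOut sIn) := by
    unfold frobNorm
    congr 1
    refine Finset.sum_congr rfl fun i _ => Finset.sum_congr rfl fun j _ => ?_
    simp only [Matrix.sub_apply, Matrix.hadamard_apply, signMatrix, absMatrix,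
      Matrix.of_apply, Matrix.vecMulVec_apply]
    split_ifs with h
    · rw [abs_of_nonneg h]; ring
    · rw [abs_of_neg (lt_of_not_ge h)]; ring
  have habsW : frobNorm (absMatrix W) = frobNorm W := by
    unfold frobNorm
    congr 1
    refine Finset.sum_congr rfl fun i _ => Finset.sum_congr rfl fun j _ => ?_
    simp [absMatrix, sq_abs]
  have hle : frobNorm (W - Matrix.hadamard (signMatrix W) (Matrix.vecMulVec sOut sIn)) ≤
      frobNorm W := by
    rw [hkey]
    calc frobNorm (absMatrix W - Matrix.vecMulVec sOut sIn)
        ≤ frobNorm (absMatrix W - Matrix.vecMulVec 0 0) := hbest 0 0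
      _ = frobNorm W := by
          rw [show Matrix.vecMulVec (0 : Fin m → ℝ) (0 : Fin n → ℝ) = 0 by
            ext i j; simp [Matrix.vecMulVec_apply], sub_zero, habsW]
  refine ⟨hle, fun hW => ?_⟩
  obtain ⟨i0, j0, hij⟩ : ∃ i j, W i j ≠ 0 := by
    by_contra h
    push_neg at h
    exact hW (by ext i j; simpa using h i j)
  set u : Fin m → ℝ := fun i => if i = i0 then |W i0 j0| else 0 with hu
  set v : Fin n → ℝ := fun j => if j = j0 then 1 else 0 with hv
  have hstrict : frobNorm (absMatrix W - Matrix.vecMulVec u v) < frobNorm W := by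
    unfold frobNorm
    apply Real.sqrt_lt_sqrt
    · positivity
    · rw [← Finset.sum_product', ← Finset.sum_product']
      apply Finset.sum_lt_sum
      · rintro ⟨i, j⟩ _
        simp only [Matrix.sub_apply, absMatrix, Matrix.of_apply, Matrix.vecMulVec_apply, hu, hv]
        by_cases h1 : i = i0 <;> by_cases h2 : j = j0 <;>
          simp [h1, h2, sq_abs] <;> nlinarith [sq_abs (W i j), abs_nonneg (W i j)]
      · refine ⟨(i0, j0), Finset.mem_product.2 ⟨Finset.mem_univ _, Finset.mem_univ _⟩, ?_⟩
        simp only [Matrix.sub_apply, absMatrix, Matrix.of_apply, Matrix.vecMulVec_apply, hu, hv]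
        simp [sq_abs]
        positivity
  calc frobNorm (W - Matrix.hadamard (signMatrix W) (Matrix.vecMulVec sOut sIn))
      = frobNorm (absMatrix W - Matrix.vecMulVec sOut sIn) := hkey
    _ ≤ frobNorm (absMatrix W - Matrix.vecMulVec u v) := hbest u v
    _ < frobNorm W := hstrict
end
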